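/- For all integers n ≥ 2 and 1 ≤ k ≤ n − 1, the following identity holds in Ĥ_n: (T_k⁻¹ T_{k−1}⁻¹ ⋯ T_1⁻¹ ρ)·(ρ T_{n−1} T_{n−2} ⋯ T_k) = ρ · T_{n−1} ⋯ T_{k+1} · T_{k−1}⁻¹ ⋯ T_1⁻¹ · ρ, where the products T_{n−1} ⋯ T_{k+1} and T_{k−1}⁻¹ ⋯ T_1⁻¹ are understood to be empty (equal to 1) when k = n − 1 and when k = 1, respectively; equivalently, ψ_R(ρ)·ψ_L(ρ) = ψ_L(ρ)·ψ_R(ρ) = ρ T_{n−1} ⋯ T_{k+1} T_{k−1}⁻¹ ⋯ T_1⁻¹ ρ. -/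

import Mathlib

/-!
Statement 6: existence and uniqueness of the parabolic embeddings `ψ_L` and `ψ_R`
for extended affine Hecke algebras.
-/

noncomputable section

namespace ParabolicInduction

/-- The ground ring `R = ℤ[q, q⁻¹]`. -/
abbrev R : Type := LaurentPolynomial ℤ

/-- The element `q ∈ R`. -/
def qR : R := LaurentPolynomial.T 1

/-- The element `q⁻¹ ∈ R`. -/
def qRinv : R := LaurentPolynomial.T (-1)

/-- Generators of the extended affine Hecke algebra `Ĥ_n`:  the `T_i` (present only
when `2 ≤ n`) and `ρ`, `ρ⁻¹`.  For `n = 1` only `ρ^{±1}` remain, so that `Ĥ_1` is the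
Laurent polynomial algebra `R[ρ, ρ⁻¹]`. -/
inductive HGen (n : ℕ) : Type
  | T (i : Fin n) (h : 2 ≤ n) : HGen n
  | rho : HGen n
  | rhoInv : HGen n

/-- Cyclic successor `i ↦ i + 1 (mod n)` on `Fin n`. -/
def cyc {n : ℕ} (i : Fin n) : Fin n := ⟨((i : ℕ) + 1) % n, Nat.mod_lt _ i.pos⟩

/-- The defining relations of the extended affine Hecke algebra `Ĥ_n`. -/
inductive HRel (n : ℕ) : FreeAlgebra R (HGen n) → FreeAlgebra R (HGen n) → Prop
  | quad (i : Fin n) (h : 2 ≤ n) :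
      HRel n ((FreeAlgebra.ι R (HGen.T i h) + algebraMap R _ qR) *
        (FreeAlgebra.ι R (HGen.T i h) - algebraMap R _ qRinv)) 0
  | comm (i j : Fin n) (h : 2 < n)
      (h1 : ((i : ℕ) : ZMod n) - ((j : ℕ) : ZMod n) ≠ 1)
      (h2 : ((i : ℕ) : ZMod n) - ((j : ℕ) : ZMod n) ≠ -1) :
      HRel n (FreeAlgebra.ι R (HGen.T i h.le) * FreeAlgebra.ι R (HGen.T j h.le))
        (FreeAlgebra.ι R (HGen.T j h.le) * FreeAlgebra.ι R (HGen.T i h.le))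
  | braid (i : Fin n) (h : 2 < n) :
      HRel n
        (FreeAlgebra.ι R (HGen.T i h.le) * FreeAlgebra.ι R (HGen.T (cyc i) h.le) *
          FreeAlgebra.ι R (HGen.T i h.le))
        (FreeAlgebra.ι R (HGen.T (cyc i) h.le) * FreeAlgebra.ι R (HGen.T i h.le) *
          FreeAlgebra.ι R (HGen.T (cyc i) h.le))
  | rho_rhoInv : HRel n (FreeAlgebra.ι R HGen.rho * FreeAlgebra.ι R HGen.rhoInv) 1
  | rhoInv_rho : HRel n (FreeAlgebra.ι R HGen.rhoInv * FreeAlgebra.ι R HGen.rho) 1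
  | conj (i : Fin n) (h : 2 ≤ n) :
      HRel n
        (FreeAlgebra.ι R HGen.rho * FreeAlgebra.ι R (HGen.T i h) * FreeAlgebra.ι R HGen.rhoInv)
        (FreeAlgebra.ι R (HGen.T (cyc i) h))

/-- The extended affine Hecke algebra `Ĥ_n`, presented by generators and relations. -/
abbrev Hecke (n : ℕ) : Type := RingQuot (HRel n)

/-- The generator `T_i` of `Ĥ_n` (indices read modulo `n`). -/
def HT {n : ℕ} (h : 2 ≤ n) (i : ℕ) : Hecke n :=
  RingQuot.mkAlgHom R (HRel n)
    (FreeAlgebra.ι R (HGen.T ⟨i % n, Nat.mod_lt _ (by omega)⟩ h))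

/-- The generator `ρ` of `Ĥ_n`. -/
def Hrho (n : ℕ) : Hecke n := RingQuot.mkAlgHom R (HRel n) (FreeAlgebra.ι R HGen.rho)

/-- The generator `ρ⁻¹` of `Ĥ_n`. -/
def HrhoInv (n : ℕ) : Hecke n := RingQuot.mkAlgHom R (HRel n) (FreeAlgebra.ι R HGen.rhoInv)

/-- The element `T_i⁻¹ = T_i + q - q⁻¹` of `Ĥ_n`. -/
def HTinv {n : ℕ} (h : 2 ≤ n) (i : ℕ) : Hecke n :=
  HT h i + algebraMap R (Hecke n) (qR - qRinv)

/-- The descending ordered product `T_a T_{a-1} ⋯ T_b` (empty, i.e. `1`, if `b > a`). -/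
def Tdesc {n : ℕ} (h : 2 ≤ n) (a b : ℕ) : Hecke n :=
  (((List.range' b (a + 1 - b)).reverse).map (HT h)).prod

/-- The ascending ordered product `T_a T_{a+1} ⋯ T_b` (empty, i.e. `1`, if `b < a`). -/
def Tasc {n : ℕ} (h : 2 ≤ n) (a b : ℕ) : Hecke n :=
  ((List.range' a (b + 1 - a)).map (HT h)).prod

/-- The descending ordered product `T_a⁻¹ T_{a-1}⁻¹ ⋯ T_b⁻¹` (empty if `b > a`). -/
def TinvDesc {n : ℕ} (h : 2 ≤ n) (a b : ℕ) : Hecke n :=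
  (((List.range' b (a + 1 - b)).reverse).map (HTinv h)).prod

/-- The ascending ordered product `T_a⁻¹ T_{a+1}⁻¹ ⋯ T_b⁻¹` (empty if `b < a`). -/
def TinvAsc {n : ℕ} (h : 2 ≤ n) (a b : ℕ) : Hecke n :=
  ((List.range' a (b + 1 - a)).map (HTinv h)).prod

/-- The defining conditions for the left parabolic embedding `ψ_L : Ĥ_k → Ĥ_n`:
`ψ_L(T_i) = T_i` for `1 ≤ i ≤ k - 1`,
`ψ_L(T_0) = T_k⁻¹ ⋯ T_{n-1}⁻¹ T_0 T_{n-1} ⋯ T_k` (when `2 ≤ k`), and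
`ψ_L(ρ) = ρ T_{n-1} ⋯ T_k`. -/
def IsPsiL (n k : ℕ) (hn : 2 ≤ n) (f : Hecke k →ₐ[R] Hecke n) : Prop :=
  (∀ (hk : 2 ≤ k) (i : ℕ), 1 ≤ i → i ≤ k - 1 → f (HT hk i) = HT hn i) ∧
  (∀ hk : 2 ≤ k, f (HT hk 0) = TinvAsc hn k (n - 1) * HT hn 0 * Tdesc hn (n - 1) k) ∧
  f (Hrho k) = Hrho n * Tdesc hn (n - 1) k

/-- The defining conditions for the right parabolic embedding `ψ_R : Ĥ_m → Ĥ_n`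
(where `m = n - k`):
`ψ_R(T_j) = T_{k+j}` for `1 ≤ j ≤ m - 1`,
`ψ_R(T_0) = T_0 T_1 ⋯ T_{k-1} T_k T_{k-1}⁻¹ ⋯ T_1⁻¹ T_0⁻¹` (when `2 ≤ m`), and
`ψ_R(ρ) = T_k⁻¹ T_{k-1}⁻¹ ⋯ T_1⁻¹ ρ`. -/
def IsPsiR (n k m : ℕ) (hn : 2 ≤ n) (g : Hecke m →ₐ[R] Hecke n) : Prop :=
  (∀ (hm : 2 ≤ m) (j : ℕ), 1 ≤ j → j ≤ m - 1 → g (HT hm j) = HT hn (k + j)) ∧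
  (∀ hm : 2 ≤ m, g (HT hm 0) = Tasc hn 0 (k - 1) * HT hn k * TinvDesc hn (k - 1) 0) ∧
  g (Hrho m) = TinvDesc hn k 1 * Hrho n

/-!
Put `D = T_{n-1} ⋯ T_{k+1}` and `I = T_{k-1}⁻¹ ⋯ T_1⁻¹`. Conjugation by `ρ` shifts all indices
by one, so `T_k⁻¹ ⋯ T_1⁻¹ ρ = ρ I T_0⁻¹` and `ρ T_{n-1} ⋯ T_k = T_n D ρ = T_0 D ρ`. In the first
product the middle factor `T_0⁻¹ T_0` cancels, leaving `ρ I D ρ`, and `I` commutes with `D`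
because the indices `1, …, k-1` and `k+1, …, n-1` are never cyclically adjacent. In the second
product `T_k T_k⁻¹` cancels directly.
-/

section DescProd

variable {M : Type*} [Monoid M]

/-- `f a * f (a - 1) * ⋯ * f b`, empty when `a < b`. -/
def descProd (f : ℕ → M) (a b : ℕ) : M :=
  (((List.range' b (a + 1 - b)).reverse).map f).prod

theorem descProd_succ_left (f : ℕ → M) {a b : ℕ} (hb : b ≤ a + 1) :
    descProd f (a + 1) b = f (a + 1) * descProd f a b := by
  unfold descProd
  rw [show a + 1 + 1 - b = (a + 1 - b) + 1 by omega, List.range'_concat,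
    show b + 1 * (a + 1 - b) = a + 1 by omega]
  simp

theorem descProd_eq_descProd_succ_mul (f : ℕ → M) {a b : ℕ} (hb : b ≤ a) :
    descProd f a b = descProd f a (b + 1) * f b := by
  unfold descProd
  rw [show a + 1 - b = (a - b) + 1 by omega, List.range'_succ,
    show a + 1 - (b + 1) = a - b by omega]
  simp

theorem mul_descProd_of_mul_eq (f : ℕ → M) (x : M) (hf : ∀ i, x * f i = f (i + 1) * x)
    (a b : ℕ) : x * descProd f a b = descProd f (a + 1) (b + 1) * x := by
  have hl : ∀ l : List ℕ, x * (l.map f).prod = (l.map fun i => f (i + 1)).prod * x := by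
    intro l
    induction l with
    | nil => simp
    | cons i l ih =>
      rw [List.map_cons, List.map_cons, List.prod_cons, List.prod_cons, ← mul_assoc, hf,
        mul_assoc, ih, mul_assoc]
  unfold descProd
  rw [hl, show a + 1 + 1 - (b + 1) = a + 1 - b by omega, List.range'_succ_left,
    ← List.map_reverse, List.map_map]
  rfl

theorem Commute.descProd_right {f : ℕ → M} {x : M} {a b : ℕ}
    (h : ∀ i, b ≤ i → i ≤ a → Commute x (f i)) : Commute x (descProd f a b) := by
  apply Commute.list_prod_right
  simp only [List.mem_map, List.mem_reverse, List.mem_range'_1]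
  rintro _ ⟨i, ⟨hbi, hia⟩, rfl⟩
  exact h i hbi (by omega)

end DescProd

theorem add_mul_sub_eq_of_mul_eq_one {A : Type*} [Ring A] {x a b : A} (hab : a * b = 1)
    (hax : Commute a x) : (x + a) * (x - b) = x * (x + (a - b)) - 1 := by
  calc (x + a) * (x - b) = x * x + a * x - x * b - a * b := by noncomm_ring
    _ = x * (x + (a - b)) - 1 := by rw [hax.eq, hab]; noncomm_ring

section Relations

variable {n : ℕ}

theorem Tdesc_eq_descProd (h : 2 ≤ n) (a b : ℕ) : Tdesc h a b = descProd (HT h) a b := rfl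

theorem TinvDesc_eq_descProd (h : 2 ≤ n) (a b : ℕ) :
    TinvDesc h a b = descProd (HTinv h) a b := rfl

theorem rhoInv_mul_rho : HrhoInv n * Hrho n = 1 := by
  simpa [Hrho, HrhoInv] using RingQuot.mkAlgHom_rel R (HRel.rhoInv_rho (n := n))

theorem HT_self (h : 2 ≤ n) : HT h n = HT h 0 := by
  simp [HT]

theorem rho_mul_HT (h : 2 ≤ n) (i : ℕ) : Hrho n * HT h i = HT h (i + 1) * Hrho n := by
  have hconj := RingQuot.mkAlgHom_rel R (HRel.conj ⟨i % n, Nat.mod_lt _ (by omega)⟩ h)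
  have hcyc : (cyc ⟨i % n, Nat.mod_lt _ (by omega)⟩ : Fin n) =
      ⟨(i + 1) % n, Nat.mod_lt _ (by omega)⟩ :=
    Fin.ext (by simp [cyc, Nat.add_mod])
  rw [hcyc] at hconj
  simp only [map_mul] at hconj
  change Hrho n * HT h i * HrhoInv n = HT h (i + 1) at hconj
  rw [← hconj, mul_assoc _ (HrhoInv n), rhoInv_mul_rho, mul_one]

theorem rho_mul_HTinv (h : 2 ≤ n) (i : ℕ) :
    Hrho n * HTinv h i = HTinv h (i + 1) * Hrho n := by
  simp only [HTinv, mul_add, add_mul, rho_mul_HT, Algebra.commutes]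

theorem commute_HT_HTinv (h : 2 ≤ n) (i : ℕ) : Commute (HT h i) (HTinv h i) :=
  (Commute.refl _).add_right (Algebra.commutes _ _).symm

theorem HT_mul_HTinv (h : 2 ≤ n) (i : ℕ) : HT h i * HTinv h i = 1 := by
  have hquad := RingQuot.mkAlgHom_rel R (HRel.quad ⟨i % n, Nat.mod_lt _ (by omega)⟩ h)
  simp only [map_mul, map_add, map_sub, map_zero, AlgHom.commutes] at hquad
  have hq : algebraMap R (Hecke n) qR * algebraMap R (Hecke n) qRinv = 1 := by
    rw [← map_mul, qR, qRinv, ← LaurentPolynomial.T_add, add_neg_cancel,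
      LaurentPolynomial.T_zero, map_one]
  have hexpand := add_mul_sub_eq_of_mul_eq_one (A := Hecke n) hq
    (Algebra.commute_algebraMap_left qR (HT h i))
  rw [HTinv, map_sub, ← sub_eq_zero, ← hexpand]
  exact hquad

theorem HTinv_mul_HT (h : 2 ≤ n) (i : ℕ) : HTinv h i * HT h i = 1 := by
  rw [← (commute_HT_HTinv h i).eq, HT_mul_HTinv]

theorem commute_HT_HT (h : 2 ≤ n) {i j : ℕ} (hij : j + 2 ≤ i) (hi : i + 2 ≤ n + j)
    (hin : i < n) : Commute (HT h i) (HT h j) := by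
  have hn : 2 < n := by omega
  have h1 : ((i % n : ℕ) : ZMod n) - ((j % n : ℕ) : ZMod n) ≠ 1 := by
    rw [ZMod.natCast_mod, ZMod.natCast_mod]
    intro hd
    have : ((i : ℕ) : ZMod n) = ((j + 1 : ℕ) : ZMod n) := by push_cast; linear_combination hd
    rw [ZMod.natCast_eq_natCast_iff', Nat.mod_eq_of_lt hin, Nat.mod_eq_of_lt (by omega)] at this
    omega
  have h2 : ((i % n : ℕ) : ZMod n) - ((j % n : ℕ) : ZMod n) ≠ -1 := by
    rw [ZMod.natCast_mod, ZMod.natCast_mod]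
    intro hd
    have : ((j : ℕ) : ZMod n) = ((i + 1 : ℕ) : ZMod n) := by push_cast; linear_combination -hd
    rw [ZMod.natCast_eq_natCast_iff', Nat.mod_eq_of_lt (by omega)] at this
    obtain hlt | heq : i + 1 < n ∨ i + 1 = n := by omega
    · rw [Nat.mod_eq_of_lt hlt] at this
      omega
    · rw [heq, Nat.mod_self] at this
      omega
  have := RingQuot.mkAlgHom_rel R
    (HRel.comm ⟨i % n, Nat.mod_lt _ (by omega)⟩ ⟨j % n, Nat.mod_lt _ (by omega)⟩ hn h1 h2)
  simp only [map_mul] at this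
  exact this

theorem commute_HTinv_HT (h : 2 ≤ n) {i j : ℕ} (hij : j + 2 ≤ i) (hi : i + 2 ≤ n + j)
    (hin : i < n) : Commute (HTinv h j) (HT h i) :=
  (commute_HT_HT h hij hi hin).symm.add_left (Algebra.commutes _ _)

end Relations

/-- **Statement 10.**  In `Ĥ_n`, one has
`(T_k⁻¹ ⋯ T_1⁻¹ ρ)(ρ T_{n-1} ⋯ T_k) = ρ T_{n-1} ⋯ T_{k+1} T_{k-1}⁻¹ ⋯ T_1⁻¹ ρ`;
equivalently `ψ_R(ρ)·ψ_L(ρ) = ψ_L(ρ)·ψ_R(ρ)` equals that same element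
(empty products being `1` in the extreme cases `k = n - 1` resp. `k = 1`). -/
theorem statement_10 (n k : ℕ) (hn : 2 ≤ n) (hk1 : 1 ≤ k) (hk2 : k ≤ n - 1) :
    ((TinvDesc hn k 1 * Hrho n) * (Hrho n * Tdesc hn (n - 1) k) =
      Hrho n * Tdesc hn (n - 1) (k + 1) * TinvDesc hn (k - 1) 1 * Hrho n) ∧
    ((Hrho n * Tdesc hn (n - 1) k) * (TinvDesc hn k 1 * Hrho n) =
      Hrho n * Tdesc hn (n - 1) (k + 1) * TinvDesc hn (k - 1) 1 * Hrho n) := by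
  obtain ⟨j, rfl⟩ : ∃ j, k = j + 1 := ⟨k - 1, by omega⟩
  rw [Nat.add_sub_cancel]
  set ρ := Hrho n
  set D := Tdesc hn (n - 1) (j + 1 + 1)
  set I := TinvDesc hn j 1
  have hI : TinvDesc hn (j + 1) 1 * ρ = ρ * I * HTinv hn 0 := by
    rw [TinvDesc_eq_descProd, ← zero_add 1, ← mul_descProd_of_mul_eq _ _ (rho_mul_HTinv hn),
      descProd_eq_descProd_succ_mul _ (Nat.zero_le j), mul_assoc]
    rfl
  have hD : ρ * Tdesc hn (n - 1) (j + 1) = HT hn 0 * D * ρ := by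
    rw [Tdesc_eq_descProd, mul_descProd_of_mul_eq _ _ (rho_mul_HT hn),
      descProd_succ_left _ (by omega), Nat.sub_add_cancel (by omega : 1 ≤ n), HT_self]
    rfl
  have hID : Commute I D := by
    refine Commute.descProd_right fun i hi hin => (Commute.descProd_right fun l hl hlj => ?_).symm
    exact (commute_HTinv_HT hn (by omega) (by omega) (by omega)).symm
  constructor
  · calc TinvDesc hn (j + 1) 1 * ρ * (ρ * Tdesc hn (n - 1) (j + 1))
        = ρ * I * (HTinv hn 0 * HT hn 0) * D * ρ := by rw [hI, hD]; simp only [mul_assoc]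
      _ = ρ * D * I * ρ := by
        rw [HTinv_mul_HT, mul_one, mul_assoc ρ, hID.eq, ← mul_assoc]
  · calc ρ * Tdesc hn (n - 1) (j + 1) * (TinvDesc hn (j + 1) 1 * ρ)
        = ρ * D * (HT hn (j + 1) * HTinv hn (j + 1)) * I * ρ := by
          rw [Tdesc_eq_descProd, descProd_eq_descProd_succ_mul _ hk2, TinvDesc_eq_descProd,
            descProd_succ_left _ (by omega)]
          simp only [mul_assoc]
          rfl
      _ = ρ * D * I * ρ := by rw [HT_mul_HTinv, mul_one]

end ParabolicInduction
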